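/- arXiv:1601.03683 — 3 statements merged into one kernel-verified Lean document; each statement's English description precedes it below -/
import Mathlib

section
/- Let α ≥ 3 and let G be the generalized quaternion group Q_{2^α} of order 2^α. Then the complement of the proper power graph of G has exactly 2 connected components: the unique element of order 2 forms one component (an isolated vertex), and all remaining non-identity elements form the other component. -/
/-!
With `n = 2^(α-2)`, `Q_{2^α}` is a `2`-group whose only involution is `z = a n`. Every
non-identity element has order a positive power of `2`, so one of its powers has order `2` and
equals `z`: the vertex `z` is isolated. The cyclic subgroup `⟨xa j⟩ = {1, z, xa j, xa (j + n)}`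
contains no rotation `a i` with `i ≠ 0, n`, while `⟨a i⟩` contains only rotations, so every such
`a i` is adjacent to every `xa j`. These are all the other vertices, and they form one component
because rotations of this kind exist (`a 1`, as `n ≥ 2`).
-/

open SimpleGraph

/-- The complement of the proper power graph of a finite group `G`: vertices are the
non-identity elements of `G`, and two vertices are adjacent iff neither is a power
of the other. -/
def propPowerCompl (G : Type*) [Group G] : SimpleGraph {g : G // g ≠ 1} where
  Adj u v := (u : G) ∉ Subgroup.zpowers (v : G) ∧ (v : G) ∉ Subgroup.zpowers (u : G)
  symm := ⟨fun u v h => ⟨h.2, h.1⟩⟩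
  loopless := ⟨fun u h => h.1 (Subgroup.mem_zpowers _)⟩

namespace SimpleGraph

variable {V : Type*} {G : SimpleGraph V}

theorem Reachable.eq_of_forall_not_adj {u v : V} (huv : G.Reachable u v)
    (hu : ∀ w, ¬G.Adj u w) : u = v := by
  obtain ⟨p⟩ := huv
  cases p with
  | nil => rfl
  | cons h _ => exact absurd h (hu _)

theorem card_connectedComponent_eq_two_of_forall_not_adj {u w : V} (hu : ∀ v, ¬G.Adj u v)
    (hwu : w ≠ u) (hw : ∀ v, v ≠ u → G.Reachable w v) :
    Nat.card G.ConnectedComponent = 2 := by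
  rw [Nat.card_eq_two_iff]
  refine ⟨G.connectedComponentMk u, G.connectedComponentMk w, ?_, ?_⟩
  · rw [Ne, ConnectedComponent.eq]
    exact fun h => hwu (h.eq_of_forall_not_adj hu).symm
  · refine Set.eq_univ_of_forall fun c => c.ind fun v => ?_
    by_cases hv : v = u
    · exact Or.inl (congrArg _ hv)
    · exact Or.inr (ConnectedComponent.eq.mpr (hw v hv).symm)

end SimpleGraph

theorem IsPGroup.mem_zpowers_of_forall_orderOf_eq {p : ℕ} [Fact p.Prime] {G : Type*} [Group G]
    (hG : IsPGroup p G) {z : G} (hz : ∀ g : G, orderOf g = p → g = z) {g : G} (hg : g ≠ 1) :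
    z ∈ Subgroup.zpowers g := by
  obtain ⟨k, hk⟩ := IsPGroup.iff_orderOf.mp hG g
  have hk0 : k ≠ 0 := by
    rintro rfl
    exact hg (orderOf_eq_one_iff.mp (by rwa [pow_zero] at hk))
  have hord : orderOf (g ^ (orderOf g / p)) = p :=
    orderOf_pow_orderOf_div (hk ▸ pow_ne_zero _ (Fact.out : p.Prime).ne_zero)
      (hk ▸ dvd_pow_self p hk0)
  exact hz _ hord ▸ Subgroup.npow_mem_zpowers g _

theorem propPowerCompl_not_adj_of_isPGroup {p : ℕ} [Fact p.Prime] {G : Type*} [Group G]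
    (hG : IsPGroup p G) {z : G} (hz : ∀ g : G, orderOf g = p → g = z)
    {u : {g : G // g ≠ 1}} (hu : orderOf (u : G) = p) (v : {g : G // g ≠ 1}) :
    ¬(propPowerCompl G).Adj u v := fun h =>
  h.1 (hz _ hu ▸ hG.mem_zpowers_of_forall_orderOf_eq hz v.2)

theorem ZMod.eq_zero_or_eq_of_add_self_eq_zero {n : ℕ} [NeZero n] {i : ZMod (2 * n)}
    (hi : i + i = 0) : i = 0 ∨ i = n := by
  rw [← ZMod.natCast_zmod_val i] at hi ⊢
  have hdvd : n ∣ i.val := by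
    rw [← Nat.cast_add, ZMod.natCast_eq_zero_iff, ← two_mul] at hi
    exact Nat.dvd_of_mul_dvd_mul_left two_pos hi
  obtain ⟨t, ht⟩ := hdvd
  have ht2 : t < 2 := Nat.lt_of_mul_lt_mul_left (a := n) (by rw [← ht]; linarith [i.val_lt])
  interval_cases t <;> simp [ht]

namespace QuaternionGroup

open Subgroup

variable {n : ℕ}

theorem xa_ne_one (i : ZMod (2 * n)) : (xa i : QuaternionGroup n) ≠ 1 := nofun

theorem a_pow (i : ZMod (2 * n)) (k : ℕ) :
    (a i : QuaternionGroup n) ^ k = a ((k : ZMod (2 * n)) * i) := by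
  induction k with
  | zero => rw [pow_zero, Nat.cast_zero, zero_mul, a_zero]
  | succ k ih => rw [pow_succ, ih, a_mul_a, Nat.cast_succ, add_one_mul]

theorem orderOf_a_n [NeZero n] : orderOf (a n : QuaternionGroup n) = 2 := by
  rw [← xa_sq 0, orderOf_pow, orderOf_xa]
  rfl

theorem eq_a_n_of_orderOf_eq_two [NeZero n] {g : QuaternionGroup n} (hg : orderOf g = 2) :
    g = a n := by
  cases g with
  | xa i => rw [orderOf_xa] at hg; omega
  | a i =>
    have hi : i + i = 0 := by
      have h := pow_orderOf_eq_one (a i : QuaternionGroup n)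
      rwa [hg, sq, a_mul_a, one_def, a.injEq] at h
    rcases ZMod.eq_zero_or_eq_of_add_self_eq_zero hi with rfl | rfl
    · simp [a_zero] at hg
    · rfl

theorem xa_notMem_zpowers_a [NeZero n] (i j : ZMod (2 * n)) :
    (xa j : QuaternionGroup n) ∉ zpowers (a i) := by
  rw [← mem_powers_iff_mem_zpowers, Submonoid.mem_powers_iff]
  rintro ⟨k, hk⟩
  rw [a_pow] at hk
  cases hk

theorem a_notMem_zpowers_xa [NeZero n] {i : ZMod (2 * n)} (hi0 : i ≠ 0) (hin : i ≠ n)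
    (j : ZMod (2 * n)) : (a i : QuaternionGroup n) ∉ zpowers (xa j) := by
  classical
  rw [mem_zpowers_iff_mem_range_orderOf, orderOf_xa]
  simp only [Finset.mem_image, Finset.mem_range]
  rintro ⟨k, hk, h⟩
  interval_cases k
  · rw [pow_zero, one_def, a.injEq] at h
    exact hi0 h.symm
  · rw [pow_one] at h
    cases h
  · rw [xa_sq, a.injEq] at h
    exact hin h.symm
  · rw [pow_succ, xa_sq, a_mul_xa] at h
    cases h

variable [NeZero n]

theorem propPowerCompl_adj_of_eq_a_of_eq_xa {u v : {g : QuaternionGroup n // g ≠ 1}}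
    {i j : ZMod (2 * n)} (hu : (u : QuaternionGroup n) = a i)
    (hu2 : orderOf (u : QuaternionGroup n) ≠ 2) (hv : (v : QuaternionGroup n) = xa j) :
    (propPowerCompl (QuaternionGroup n)).Adj u v := by
  have hi0 : i ≠ 0 := by
    rintro rfl
    exact u.2 (hu.trans a_zero)
  have hin : i ≠ n := by
    rintro rfl
    exact hu2 (hu ▸ orderOf_a_n)
  refine ⟨?_, ?_⟩ <;> rw [hu, hv]
  · exact a_notMem_zpowers_xa hi0 hin j
  · exact xa_notMem_zpowers_a i j

theorem propPowerCompl_reachable_of_orderOf_ne_two (hn : 2 ≤ n)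
    (u v : {g : QuaternionGroup n // g ≠ 1}) (hu : orderOf (u : QuaternionGroup n) ≠ 2)
    (hv : orderOf (v : QuaternionGroup n) ≠ 2) :
    (propPowerCompl (QuaternionGroup n)).Reachable u v := by
  have hr : orderOf (a 1 : QuaternionGroup n) = 2 * n := orderOf_a_one
  have hr2 : orderOf (a 1 : QuaternionGroup n) ≠ 2 := by omega
  let r : {g : QuaternionGroup n // g ≠ 1} :=
    ⟨a 1, fun h => by rw [h, orderOf_one] at hr; omega⟩
  let s : {g : QuaternionGroup n // g ≠ 1} := ⟨xa 0, xa_ne_one 0⟩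
  have hrs := propPowerCompl_adj_of_eq_a_of_eq_xa (u := r) (v := s) rfl hr2 rfl
  -- `a 1` is adjacent to every `xa j`; every other admissible `a i` reaches it through `xa 0`
  have hub : ∀ w : {g : QuaternionGroup n // g ≠ 1}, orderOf (w : QuaternionGroup n) ≠ 2 →
      (propPowerCompl (QuaternionGroup n)).Reachable r w := by
    rintro ⟨_ | _, _⟩ hw
    · exact hrs.reachable.trans (propPowerCompl_adj_of_eq_a_of_eq_xa rfl hw rfl).symm.reachable
    · exact (propPowerCompl_adj_of_eq_a_of_eq_xa (u := r) rfl hr2 rfl).reachable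
  exact (hub u hu).symm.trans (hub v hv)

end QuaternionGroup

/-- For `α ≥ 3`, the complement of the proper power graph of the generalized
quaternion group `Q_{2^α}` (of order `2^α`, realized as `QuaternionGroup (2^(α-2))`)
has exactly 2 connected components: the unique element of order 2 is an isolated
vertex forming one component, and all remaining non-identity elements are mutually
reachable, forming the other component. -/
theorem propPowerCompl_quaternion_components (α : ℕ) (hα : 3 ≤ α) :
    Nat.card
        (propPowerCompl (QuaternionGroup (2 ^ (α - 2)))).ConnectedComponent = 2 ∧
    (∃! u : {g : QuaternionGroup (2 ^ (α - 2)) // g ≠ 1}, orderOf (u : QuaternionGroup (2 ^ (α - 2))) = 2) ∧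
    (∀ u v : {g : QuaternionGroup (2 ^ (α - 2)) // g ≠ 1},
      orderOf (u : QuaternionGroup (2 ^ (α - 2))) = 2 →
        ¬ (propPowerCompl (QuaternionGroup (2 ^ (α - 2)))).Adj u v) ∧
    (∀ u v : {g : QuaternionGroup (2 ^ (α - 2)) // g ≠ 1},
      orderOf (u : QuaternionGroup (2 ^ (α - 2))) ≠ 2 →
      orderOf (v : QuaternionGroup (2 ^ (α - 2))) ≠ 2 →
        (propPowerCompl (QuaternionGroup (2 ^ (α - 2)))).Reachable u v) := by
  set n := 2 ^ (α - 2)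
  have hn : 2 ≤ n := Nat.le_self_pow (by omega) 2
  have : NeZero n := ⟨by omega⟩
  have hG : IsPGroup 2 (QuaternionGroup n) := IsPGroup.of_card (n := α) <| by
    rw [Nat.card_eq_fintype_card, QuaternionGroup.card, show α = 2 + (α - 2) by omega, pow_add]
    rfl
  have hz : ∀ g : QuaternionGroup n, orderOf g = 2 → g = .a n :=
    fun _ => QuaternionGroup.eq_a_n_of_orderOf_eq_two
  have hza : orderOf (.a n : QuaternionGroup n) = 2 := QuaternionGroup.orderOf_a_n
  let z : {g : QuaternionGroup n // g ≠ 1} := ⟨.a n, fun h => by simp [h] at hza⟩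
  let x : {g : QuaternionGroup n // g ≠ 1} := ⟨.xa 0, QuaternionGroup.xa_ne_one 0⟩
  have hx : orderOf (x : QuaternionGroup n) ≠ 2 := by rw [QuaternionGroup.orderOf_xa]; omega
  have isolated : ∀ u v : {g : QuaternionGroup n // g ≠ 1},
      orderOf (u : QuaternionGroup n) = 2 → ¬(propPowerCompl (QuaternionGroup n)).Adj u v :=
    fun _ v hu => propPowerCompl_not_adj_of_isPGroup hG hz hu v
  have reachable := QuaternionGroup.propPowerCompl_reachable_of_orderOf_ne_two (n := n) hn
  refine ⟨?_, ⟨z, hza, fun v hv => Subtype.ext (hz _ hv)⟩, isolated, reachable⟩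
  exact card_connectedComponent_eq_two_of_forall_not_adj (u := z) (w := x)
    (fun v => isolated z v hza) (fun h => nomatch congrArg Subtype.val h)
    fun v hv => reachable x v hx fun h => hv (Subtype.ext (hz _ h))
end

section
/- Let p < q be primes with p dividing q − 1, and let G be the nonabelian group of order pq (the semidirect product ℤ/qℤ ⋊ ℤ/pℤ). Then the complement of the proper power graph of G is isomorphic to the join K(q, p−1) + K̄_{q−1}, where K(q, p−1) is the complete q-partite graph whose parts are the sets of non-identity elements of the q Sylow p-subgroups (each of size p − 1), and K̄_{q−1} is the empty graph on the q − 1 elements of order q. -/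
open SimpleGraph

/-- The join of two simple graphs: their disjoint union together with all edges
joining a vertex of the first graph to a vertex of the second. -/
def SimpleGraph.graphJoin {V₁ V₂ : Type*} (G₁ : SimpleGraph V₁) (G₂ : SimpleGraph V₂) :
    SimpleGraph (V₁ ⊕ V₂) where
  Adj u v := match u, v with
    | Sum.inl a, Sum.inl b => G₁.Adj a b
    | Sum.inr a, Sum.inr b => G₂.Adj a b
    | _, _ => True
  symm := ⟨by rintro (a | a) (b | b) h <;> simp_all <;> exact h.symm⟩
  loopless := ⟨by rintro (a | a) h <;> simp_all⟩

/-!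
Every nontrivial element of a nonabelian group of order `pq` has prime order, since an element of
order `pq` would make the group cyclic. In a group where all nontrivial elements have prime order,
`u` is a power of `v` exactly when both generate the same subgroup, so the complement of the proper
power graph is the complete multipartite graph whose parts are the nontrivial elements of the
subgroups of prime order. For order `pq` these are the unique (Sylow) subgroup of order `q`, an
independent set of `q - 1` vertices joined to everything else, and the subgroups of order `p`,
of which there are `q` because the `pq - 1` nontrivial elements are partitioned among all parts.
-/

lemma Nat.card_subtype_ne {α : Type*} [Finite α] (a : α) :
    Nat.card {x : α // x ≠ a} = Nat.card α - 1 := by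
  classical
  rw [← Nat.card_congr (Equiv.optionSubtypeNe a), Finite.card_option, Nat.add_sub_cancel]

lemma Nat.card_sigma_of_card_eq {α : Type*} {β : α → Type*} [Finite α] [∀ a, Finite (β a)]
    {n : ℕ} (h : ∀ a, Nat.card (β a) = n) : Nat.card (Σ a, β a) = Nat.card α * n := by
  have := Fintype.ofFinite α
  simp [Nat.card_sigma, h]

lemma Nat.prime_of_dvd_mul_of_ne {p q d : ℕ} (hp : p.Prime) (hq : q.Prime) (hd : d ∣ p * q)
    (hd1 : d ≠ 1) (hdpq : d ≠ p * q) : d.Prime := by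
  obtain ⟨a, b, ha, hb, rfl⟩ := Nat.dvd_mul.mp hd
  rcases (Nat.dvd_prime hp).mp ha with rfl | rfl <;> rcases (Nat.dvd_prime hq).mp hb with rfl | rfl
  all_goals simp_all

namespace SimpleGraph

section graphJoin

variable {V₁ V₂ : Type*} {G₁ : SimpleGraph V₁} {G₂ : SimpleGraph V₂}

@[simp] lemma graphJoin_adj_inl_inl {a b : V₁} :
    (G₁.graphJoin G₂).Adj (.inl a) (.inl b) ↔ G₁.Adj a b := Iff.rfl

@[simp] lemma graphJoin_adj_inr_inr {a b : V₂} :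
    (G₁.graphJoin G₂).Adj (.inr a) (.inr b) ↔ G₂.Adj a b := Iff.rfl

@[simp] lemma graphJoin_adj_inl_inr {a : V₁} {b : V₂} :
    (G₁.graphJoin G₂).Adj (.inl a) (.inr b) := trivial

@[simp] lemma graphJoin_adj_inr_inl {a : V₂} {b : V₁} :
    (G₁.graphJoin G₂).Adj (.inr a) (.inl b) := trivial

def Iso.graphJoin {W₁ W₂ : Type*} {H₁ : SimpleGraph W₁} {H₂ : SimpleGraph W₂}
    (φ₁ : G₁ ≃g H₁) (φ₂ : G₂ ≃g H₂) : G₁.graphJoin G₂ ≃g H₁.graphJoin H₂ where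
  toEquiv := φ₁.toEquiv.sumCongr φ₂.toEquiv
  map_rel_iff' := by rintro (a | a) (b | b) <;> simp [φ₁.map_adj_iff, φ₂.map_adj_iff]

end graphJoin

variable {ι κ : Type*} {V : ι → Type*} {W : κ → Type*}

def Iso.completeMultipartiteGraphBot [Subsingleton ι] {α : Type*} (e : (Σ i, V i) ≃ α) :
    completeMultipartiteGraph V ≃g (⊥ : SimpleGraph α) where
  toEquiv := e
  map_rel_iff' {a b} := by simp [Subsingleton.elim a.1 b.1]

def Iso.completeMultipartiteGraph (e : ι ≃ κ) (f : ∀ i, V i ≃ W (e i)) :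
    completeMultipartiteGraph V ≃g completeMultipartiteGraph W where
  toEquiv := e.sigmaCongr f
  map_rel_iff' := by simp [Equiv.sigmaCongr, e.injective.ne_iff]

def graphJoinCompleteMultipartiteIso {κ₁ κ₂ : Type*} (e : ι ≃ κ₁ ⊕ κ₂) :
    (completeMultipartiteGraph fun k => V (e.symm (.inl k))).graphJoin
      (completeMultipartiteGraph fun k => V (e.symm (.inr k))) ≃g completeMultipartiteGraph V where
  toEquiv := (Equiv.sumSigmaDistrib _).symm.trans (Equiv.sigmaCongrLeft e.symm)
  map_rel_iff' := by
    rintro (⟨k, x⟩ | ⟨k, x⟩) (⟨l, y⟩ | ⟨l, y⟩) <;>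
      change e.symm _ ≠ e.symm _ ↔ _ <;> simp

end SimpleGraph

section PrimeOrder

variable {G : Type*} [Group G]

lemma Subgroup.zpowers_eq_of_card_prime {H : Subgroup G} (hH : (Nat.card H).Prime) {g : G}
    (hg : g ∈ H) (hg1 : g ≠ 1) : Subgroup.zpowers g = H := by
  have : Finite H := Nat.finite_of_card_ne_zero hH.ne_zero
  have hle : Subgroup.zpowers g ≤ H := Subgroup.zpowers_le.mpr hg
  have hcard : Nat.card (Subgroup.zpowers g) = Nat.card H :=
    (hH.eq_one_or_self_of_dvd _ (Subgroup.card_dvd_of_le hle)).resolve_left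
      (by rwa [Nat.card_zpowers, orderOf_eq_one_iff])
  exact Subgroup.eq_of_le_of_card_ge hle hcard.ge

lemma mem_zpowers_iff_zpowers_eq {g h : G} (hg : g ≠ 1) (hh : (orderOf h).Prime) :
    g ∈ Subgroup.zpowers h ↔ Subgroup.zpowers g = Subgroup.zpowers h :=
  ⟨fun hmem => Subgroup.zpowers_eq_of_card_prime (by rwa [Nat.card_zpowers]) hmem hg,
    fun heq => heq ▸ Subgroup.mem_zpowers g⟩

lemma propPowerCompl_adj_iff (hG : ∀ g : G, g ≠ 1 → (orderOf g).Prime) {u v : {g : G // g ≠ 1}} :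
    (propPowerCompl G).Adj u v ↔ Subgroup.zpowers (u : G) ≠ Subgroup.zpowers (v : G) := by
  change (u : G) ∉ _ ∧ (v : G) ∉ _ ↔ _
  rw [mem_zpowers_iff_zpowers_eq u.2 (hG v v.2),
    mem_zpowers_iff_zpowers_eq v.2 (hG u u.2), eq_comm (a := Subgroup.zpowers (v : G))]
  exact and_self_iff

def propPowerComplIsoCompleteMultipartite (hG : ∀ g : G, g ≠ 1 → (orderOf g).Prime) :
    propPowerCompl G ≃g completeMultipartiteGraph
      fun H : {H : Subgroup G // (Nat.card H).Prime} => {x : H.1 // x ≠ 1} where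
  toFun g := ⟨⟨Subgroup.zpowers g, by rw [Nat.card_zpowers]; exact hG g g.2⟩,
    ⟨g, Subgroup.mem_zpowers _⟩, fun h => g.2 congr($h.1)⟩
  invFun x := ⟨x.2, fun h => x.2.2 (Subtype.ext h)⟩
  left_inv _ := rfl
  right_inv := by
    rintro ⟨⟨H, hH⟩, ⟨x, hxH⟩, hx⟩
    obtain rfl := Subgroup.zpowers_eq_of_card_prime hH hxH fun h => hx (Subtype.ext h)
    rfl
  map_rel_iff' {u v} := by
    rw [propPowerCompl_adj_iff hG]
    simp

end PrimeOrder

section OrderPQ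

variable {G : Type*} [Group G] {p q : ℕ}

lemma card_subgroup_eq_or_of_card_eq_mul (hp : p.Prime) (hq : q.Prime) (hcard : Nat.card G = p * q)
    (H : Subgroup G) : (Nat.card H).Prime ↔ Nat.card H = p ∨ Nat.card H = q := by
  refine ⟨fun hH => ?_, by rintro (h | h) <;> rw [h] <;> assumption⟩
  have hdvd : Nat.card H ∣ p * q := hcard ▸ Subgroup.card_subgroup_dvd_card H
  rcases (Nat.Prime.dvd_mul hH).mp hdvd with h | h
  · exact .inl ((Nat.prime_dvd_prime_iff_eq hH hp).mp h)
  · exact .inr ((Nat.prime_dvd_prime_iff_eq hH hq).mp h)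

noncomputable def primeCardSubgroupEquivSum (hp : p.Prime) (hq : q.Prime) (hpq : p ≠ q)
    (hcard : Nat.card G = p * q) :
    {H : Subgroup G // (Nat.card H).Prime} ≃
      {H : Subgroup G // Nat.card H = p} ⊕ {H : Subgroup G // Nat.card H = q} :=
  (Equiv.subtypeEquivRight (card_subgroup_eq_or_of_card_eq_mul hp hq hcard)).trans
    (subtypeOrEquiv _ _ <| Pi.disjoint_iff.mpr fun _ =>
      disjoint_iff.mpr <| eq_bot_iff.mpr fun h => hpq (h.1.symm.trans h.2))

variable [Finite G]

lemma card_subtype_ne_one_of_card_eq {r : ℕ} {H : Subgroup G} (hH : Nat.card H = r) :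
    Nat.card {x : H // x ≠ 1} = r - 1 := by
  rw [Nat.card_subtype_ne, hH]

lemma orderOf_prime_of_card_eq_mul (hp : p.Prime) (hq : q.Prime) (hcard : Nat.card G = p * q)
    (hna : ¬ ∀ a b : G, a * b = b * a) (g : G) (hg : g ≠ 1) : (orderOf g).Prime := by
  refine Nat.prime_of_dvd_mul_of_ne hp hq (hcard ▸ orderOf_dvd_natCard g)
    (by rwa [Ne, orderOf_eq_one_iff]) fun hgen => hna ?_
  have := isCyclic_of_orderOf_eq_card g (hgen.trans hcard.symm)
  exact IsCyclic.commGroup.mul_comm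

/-- Sylow: the number of Sylow `q`-subgroups divides `p` and is `1` modulo `q > p`. -/
lemma Subgroup.eq_of_card_eq_of_card_eq_mul (hp : p.Prime) (hq : q.Prime) (hpq : p < q)
    (hcard : Nat.card G = p * q) {H K : Subgroup G} (hH : Nat.card H = q) (hK : Nat.card K = q) :
    H = K := by
  have : Fact q.Prime := ⟨hq⟩
  have hindex {L : Subgroup G} (hL : Nat.card L = q) : L.index = p := by
    have := L.index_mul_card
    rw [hL, hcard] at this
    exact Nat.eq_of_mul_eq_mul_right hq.pos this
  let toSylow {L : Subgroup G} (hL : Nat.card L = q) : Sylow q G :=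
    (IsPGroup.of_card (n := 1) (by rw [hL, pow_one])).toSylow
      (by rw [hindex hL]; exact Nat.not_dvd_of_pos_of_lt hp.pos hpq)
  have : Subsingleton (Sylow q G) := by
    refine (Nat.card_eq_one_iff_unique.mp ?_).1
    rcases (Nat.dvd_prime hp).mp (hindex hH ▸ (toSylow hH).card_dvd_index) with h | h
    · exact h
    · have := card_sylow_modEq_one q G
      rw [h, Nat.ModEq, Nat.mod_eq_of_lt hpq, Nat.mod_eq_of_lt hq.one_lt] at this
      exact absurd this hp.one_lt.ne'
  exact congrArg Sylow.toSubgroup (Subsingleton.elim (toSylow hH) (toSylow hK))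

lemma card_subgroups_card_eq_right (hp : p.Prime) (hq : q.Prime) (hpq : p < q)
    (hcard : Nat.card G = p * q) : Nat.card {H : Subgroup G // Nat.card H = q} = 1 := by
  have : Fact q.Prime := ⟨hq⟩
  obtain ⟨g, hg⟩ := exists_prime_orderOf_dvd_card' (G := G) q (hcard ▸ dvd_mul_left q p)
  have hcard_g : Nat.card (Subgroup.zpowers g) = q := (Nat.card_zpowers g).trans hg
  exact Nat.card_eq_one_iff_exists.mpr ⟨⟨_, hcard_g⟩, fun H =>
    Subtype.ext (Subgroup.eq_of_card_eq_of_card_eq_mul hp hq hpq hcard H.2 hcard_g)⟩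

lemma card_sigma_subgroups_card_eq_right (hp : p.Prime) (hq : q.Prime) (hpq : p < q)
    (hcard : Nat.card G = p * q) :
    Nat.card (Σ H : {H : Subgroup G // Nat.card H = q}, {x : H.1 // x ≠ 1}) = q - 1 := by
  rw [Nat.card_sigma_of_card_eq fun H => card_subtype_ne_one_of_card_eq H.2,
    card_subgroups_card_eq_right hp hq hpq hcard, one_mul]

noncomputable def propPowerComplIsoGraphJoin (hp : p.Prime) (hq : q.Prime) (hpq : p < q)
    (hcard : Nat.card G = p * q) (hna : ¬ ∀ a b : G, a * b = b * a) :
    propPowerCompl G ≃g graphJoin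
      (completeMultipartiteGraph
        fun H : {H : Subgroup G // Nat.card H = p} => {x : H.1 // x ≠ 1})
      (completeMultipartiteGraph
        fun H : {H : Subgroup G // Nat.card H = q} => {x : H.1 // x ≠ 1}) :=
  (propPowerComplIsoCompleteMultipartite (orderOf_prime_of_card_eq_mul hp hq hcard hna)).trans
    (graphJoinCompleteMultipartiteIso (primeCardSubgroupEquivSum hp hq hpq.ne hcard)).symm

lemma card_subgroups_card_eq_left (hp : p.Prime) (hq : q.Prime) (hpq : p < q)
    (hcard : Nat.card G = p * q) (hna : ¬ ∀ a b : G, a * b = b * a) :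
    Nat.card {H : Subgroup G // Nat.card H = p} = q := by
  have hsum := (Nat.card_congr (propPowerComplIsoGraphJoin hp hq hpq hcard hna).toEquiv).trans
    Nat.card_sum
  rw [Nat.card_subtype_ne, hcard, card_sigma_subgroups_card_eq_right hp hq hpq hcard,
    Nat.card_sigma_of_card_eq fun H => card_subtype_ne_one_of_card_eq H.2] at hsum
  have hpq_pos : 0 < p * q := hcard ▸ Nat.card_pos
  refine Nat.eq_of_mul_eq_mul_right (Nat.sub_pos_of_lt hp.one_lt) ?_
  zify [hp.one_le, hq.one_le, hpq_pos] at hsum ⊢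
  linear_combination -hsum

end OrderPQ

theorem propPowerCompl_nonabelian_pq_general (p q : ℕ) (hp : p.Prime) (hq : q.Prime)
    (hpq : p < q) (G : Type*) [Group G] [Finite G]
    (hcard : Nat.card G = p * q) (hna : ¬ ∀ a b : G, a * b = b * a) :
    Nonempty
      ((propPowerCompl G) ≃g
        SimpleGraph.graphJoin
          (completeMultipartiteGraph (fun _ : Fin q => Fin (p - 1)))
          (⊥ : SimpleGraph (Fin (q - 1)))) := by
  have : Subsingleton {H : Subgroup G // Nat.card H = q} :=
    (Nat.card_eq_one_iff_unique.mp (card_subgroups_card_eq_right hp hq hpq hcard)).1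
  let orderP :=
    Iso.completeMultipartiteGraph (W := fun _ : Fin q => Fin (p - 1))
      (Finite.equivFinOfCardEq (card_subgroups_card_eq_left hp hq hpq hcard hna))
      fun H => Finite.equivFinOfCardEq (card_subtype_ne_one_of_card_eq H.2)
  let orderQ : _ ≃g (⊥ : SimpleGraph (Fin (q - 1))) :=
    Iso.completeMultipartiteGraphBot
      (Finite.equivFinOfCardEq (card_sigma_subgroups_card_eq_right hp hq hpq hcard))
  exact ⟨(propPowerComplIsoGraphJoin hp hq hpq hcard hna).trans (orderP.graphJoin orderQ)⟩

/-- Let `p < q` be primes with `p ∣ q − 1` and let `G` be the nonabelian group of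
order `pq`. Then the complement of the proper power graph of `G` is isomorphic to the
join `K(q, p−1) + K̄_{q−1}` of the complete `q`-partite graph with parts of size
`p − 1` (the non-identity elements of the `q` Sylow `p`-subgroups) and the edgeless
graph on `q − 1` vertices (the elements of order `q`). -/
theorem propPowerCompl_nonabelian_pq (p q : ℕ) (hp : p.Prime) (hq : q.Prime)
    (hpq : p < q) (hdvd : p ∣ q - 1) (G : Type*) [Group G] [Finite G]
    (hcard : Nat.card G = p * q) (hna : ¬ ∀ a b : G, a * b = b * a) :
    Nonempty
      ((propPowerCompl G) ≃g
        SimpleGraph.graphJoin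
          (completeMultipartiteGraph (fun _ : Fin q => Fin (p - 1)))
          (⊥ : SimpleGraph (Fin (q - 1)))) :=
  propPowerCompl_nonabelian_pq_general p q hp hq hpq G hcard hna
end

section
/- Let G be a finite nontrivial group. The complement of the proper power graph of G does not contain K_{1,4} as a subgraph (equivalently, every vertex has degree at most 3) if and only if G is isomorphic to a cyclic group ℤ/p^nℤ for a prime p and n ≥ 1, to ℤ/6ℤ, or to ℤ/2ℤ × ℤ/2ℤ. -/
/-!
The neighbours of `x` in the complement of the proper power graph are the `y` with `y ∉ ⟨x⟩` and
`x ∉ ⟨y⟩`, and the condition says that every `x` has at most three of them.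

If `G` is not cyclic, an element of maximal order generates a proper subgroup and is incomparable
with everything outside it, so `|G| ≤ 6`; order `6` is excluded by an involution of `S₃`, which
leaves the Klein four-group. If `G` is cyclic, `y ∈ ⟨x⟩` just means `ord y ∣ ord x`. In a cyclic
`p`-group any two elements are therefore comparable, while in general an element of order `p` is
incomparable with the nontrivial elements of the Hall `p'`-subgroup, so the `p'`-part of `|G|` is at
most `4` for every prime `p ∣ |G|`. Apart from prime powers this leaves `|G| ∈ {6, 12}`, and in
`ℤ/12ℤ` an element of order `4` has four neighbours.
-/

open SimpleGraph

open Subgroup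

section General

variable {G : Type*} [Group G]

def powerIncomparables (x : G) : Set G := {y | y ∉ zpowers x ∧ x ∉ zpowers y}

lemma ncard_zpowers (x : G) : (zpowers x : Set G).ncard = orderOf x := by
  rw [← Nat.card_coe_set_eq, SetLike.coe_sort_coe, Nat.card_zpowers]

lemma powerIncomparables_one : powerIncomparables (1 : G) = ∅ :=
  Set.eq_empty_of_forall_notMem fun _ hy => hy.2 (one_mem _)

lemma image_val_neighborSet_propPowerCompl (c : {g : G // g ≠ 1}) :
    Subtype.val '' (propPowerCompl G).neighborSet c = powerIncomparables (c : G) := by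
  ext y
  constructor
  · rintro ⟨w, ⟨hcw, hwc⟩, rfl⟩
    exact ⟨hwc, hcw⟩
  · rintro ⟨hyc, hcy⟩
    exact ⟨⟨y, by rintro rfl; exact hyc (one_mem _)⟩, ⟨hcy, hyc⟩, rfl⟩

lemma ncard_neighborSet_propPowerCompl (c : {g : G // g ≠ 1}) :
    ((propPowerCompl G).neighborSet c).ncard = (powerIncomparables (c : G)).ncard := by
  rw [← image_val_neighborSet_propPowerCompl, Set.ncard_image_of_injective _ Subtype.val_injective]

lemma exists_star_propPowerCompl_iff [Finite G] :
    (∃ c w₁ w₂ w₃ w₄ : {g : G // g ≠ 1},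
        w₁ ≠ w₂ ∧ w₁ ≠ w₃ ∧ w₁ ≠ w₄ ∧ w₂ ≠ w₃ ∧ w₂ ≠ w₄ ∧ w₃ ≠ w₄ ∧
        (propPowerCompl G).Adj c w₁ ∧ (propPowerCompl G).Adj c w₂ ∧
        (propPowerCompl G).Adj c w₃ ∧ (propPowerCompl G).Adj c w₄) ↔
      ∃ x : G, 3 < (powerIncomparables x).ncard := by
  constructor
  · rintro ⟨c, w₁, w₂, w₃, w₄, h₁₂, h₁₃, h₁₄, h₂₃, h₂₄, h₃₄, h₁, h₂, h₃, h₄⟩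
    refine ⟨c, ncard_neighborSet_propPowerCompl c ▸ (Set.three_lt_ncard_iff (Set.toFinite _)).mpr
      ⟨w₁, w₂, w₃, w₄, h₁, h₂, h₃, h₄, h₁₂, h₁₃, h₁₄, h₂₃, h₂₄, h₃₄⟩⟩
  · rintro ⟨x, hx⟩
    have hx₁ : x ≠ 1 := by
      rintro rfl
      simp [powerIncomparables_one] at hx
    rw [← ncard_neighborSet_propPowerCompl ⟨x, hx₁⟩, Set.three_lt_ncard_iff] at hx
    obtain ⟨w₁, w₂, w₃, w₄, h₁, h₂, h₃, h₄, h₁₂, h₁₃, h₁₄, h₂₃, h₂₄, h₃₄⟩ := hx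
    exact ⟨⟨x, hx₁⟩, w₁, w₂, w₃, w₄, h₁₂, h₁₃, h₁₄, h₂₃, h₂₄, h₃₄, h₁, h₂, h₃, h₄⟩

lemma ncard_powerIncomparables_le [Finite G] (x : G) :
    (powerIncomparables x).ncard ≤ Nat.card G - orderOf x := by
  calc (powerIncomparables x).ncard ≤ (zpowers x : Set G)ᶜ.ncard :=
        Set.ncard_le_ncard fun _ hy => hy.1
    _ = Nat.card G - orderOf x := by rw [Set.ncard_compl, ncard_zpowers]

lemma ncard_powerIncomparables_of_forall_mem_zpowers [Finite G] {x : G}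
    (hx : ∀ y, x ∈ zpowers y → y ∈ zpowers x) :
    (powerIncomparables x).ncard = Nat.card G - orderOf x := by
  have : powerIncomparables x = (zpowers x : Set G)ᶜ :=
    Set.ext fun y => ⟨And.left, fun hy => ⟨hy, mt (hx y) hy⟩⟩
  rw [this, Set.ncard_compl, ncard_zpowers]

lemma mem_zpowers_of_mem_zpowers_of_orderOf_le [Finite G] {x y : G} (h : x ∈ zpowers y)
    (hord : orderOf y ≤ orderOf x) : y ∈ zpowers x := by
  have hle : zpowers x ≤ zpowers y := zpowers_le.mpr h
  rw [eq_of_le_of_card_ge hle (by rwa [Nat.card_zpowers, Nat.card_zpowers])]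
  exact mem_zpowers y

lemma card_sub_gcd_le_ncard_powerIncomparables [Finite G] {x : G} {K : Subgroup G} (hx : x ∉ K) :
    Nat.card K - (Nat.card K).gcd (orderOf x) ≤ (powerIncomparables x).ncard := by
  have hsub : (K : Set G) \ (K ⊓ zpowers x : Subgroup G) ⊆ powerIncomparables x :=
    fun y ⟨hyK, hyx⟩ => ⟨fun h => hyx ⟨hyK, h⟩, fun h => hx (zpowers_le.mpr hyK h)⟩
  have hinter : Nat.card (K ⊓ zpowers x : Subgroup G) ≤ (Nat.card K).gcd (orderOf x) :=
    Nat.le_of_dvd (Nat.gcd_pos_of_pos_left _ Nat.card_pos) <| Nat.dvd_gcd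
      (card_dvd_of_le inf_le_left) (Nat.card_zpowers x ▸ card_dvd_of_le inf_le_right)
  calc Nat.card K - (Nat.card K).gcd (orderOf x)
      ≤ (K : Set G).ncard - ((K ⊓ zpowers x : Subgroup G) : Set G).ncard := by
        rw [← Nat.card_coe_set_eq, ← Nat.card_coe_set_eq, SetLike.coe_sort_coe,
          SetLike.coe_sort_coe]
        omega
    _ ≤ ((K : Set G) \ (K ⊓ zpowers x : Subgroup G)).ncard := Set.le_ncard_sdiff _ _
    _ ≤ (powerIncomparables x).ncard := Set.ncard_le_ncard hsub

end General

/-- If `n` is not a prime power and `p` is its smallest prime factor, a prime factor `q` of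
`ordCompl[p] n ≤ 4` satisfies `p < q ≤ 4`, so `p = 2`, `q = 3` and `n = 2 ^ a * 3`; finally
`2 ^ a ≤ ordCompl[3] n ≤ 4`. -/
lemma Nat.eq_six_or_eq_twelve_of_ordCompl_le_four {n : ℕ} (hn : 1 < n) (hpp : ¬ IsPrimePow n)
    (h : ∀ p : ℕ, p.Prime → p ∣ n → ordCompl[p] n ≤ 4) : n = 6 ∨ n = 12 := by
  have hn0 : n ≠ 0 := by omega
  obtain ⟨p, hp, hpn, hpmin⟩ : ∃ p, p.Prime ∧ p ∣ n ∧ ∀ q, q.Prime → q ∣ n → p ≤ q :=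
    ⟨n.minFac, Nat.minFac_prime hn.ne', Nat.minFac_dvd n,
      fun q hq hqn => Nat.minFac_le_of_dvd hq.two_le hqn⟩
  have hm0 : 0 < ordCompl[p] n := Nat.ordCompl_pos p hn0
  have hm4 : ordCompl[p] n ≤ 4 := h p hp hpn
  have hpm : ¬ p ∣ ordCompl[p] n := Nat.not_dvd_ordCompl hp hn0
  have hm1 : ordCompl[p] n ≠ 1 := fun h1 =>
    hpp ((exists_ordCompl_eq_one_iff_isPrimePow hn.ne').mpr ⟨p, hp, h1⟩)
  obtain ⟨q, hq, hqm⟩ := Nat.exists_prime_and_dvd hm1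
  have hpq : p < q := lt_of_le_of_ne (hpmin q hq (hqm.trans (Nat.ordCompl_dvd n p)))
    fun hpq => hpm (hpq ▸ hqm)
  have hq4 : q ≤ 4 := (Nat.le_of_dvd hm0 hqm).trans hm4
  have hq3 : q = 3 := by
    have : q ≠ 4 := fun h4 => by rw [h4] at hq; norm_num at hq
    have := hp.two_le
    omega
  obtain rfl : p = 2 := by
    have := hp.two_le
    omega
  subst hq3
  have hm3 : ordCompl[2] n = 3 := by omega
  set a := n.factorization 2
  have hn2 : 2 ^ a * 3 = n := hm3 ▸ Nat.ordProj_mul_ordCompl_eq_self n 2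
  have h3 : ¬ 3 ∣ 2 ^ a := fun h3 => by
    have := Nat.prime_three.dvd_of_dvd_pow h3
    norm_num at this
  have ha : 2 ^ a ≤ 2 ^ 2 :=
    (Nat.le_of_dvd (Nat.ordCompl_pos 3 hn0) (Nat.dvd_ordCompl_of_dvd_not_dvd ⟨3, hn2.symm⟩ h3)).trans
      (h 3 Nat.prime_three ⟨2 ^ a, by rw [← hn2, mul_comm]⟩)
  have ha1 : 1 ≤ a := hp.factorization_pos_of_dvd hn0 hpn
  have ha2 : a ≤ 2 := (pow_le_pow_iff_right₀ one_lt_two).mp ha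
  interval_cases a <;> omega

section Cyclic

variable {G : Type*} [Group G] [Finite G] [IsCyclic G]

theorem IsCyclic.exists_orderOf_eq_of_dvd {d : ℕ} (hd : d ∣ Nat.card G) :
    ∃ g : G, orderOf g = d := by
  obtain ⟨g, hg⟩ := IsCyclic.exists_ofOrder_eq_natCard (α := G)
  exact ⟨g ^ (orderOf g / d), orderOf_pow_orderOf_div (hg ▸ Nat.card_pos.ne') (hg ▸ hd)⟩

/-- In a cyclic group `zpowers b` is the set of solutions of `y ^ orderOf b = 1`, since it already
has `orderOf b` elements and there are at most that many solutions. -/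
theorem IsCyclic.mem_zpowers_iff_orderOf_dvd {a b : G} :
    a ∈ zpowers b ↔ orderOf a ∣ orderOf b := by
  classical
  have := Fintype.ofFinite G
  refine ⟨orderOf_dvd_of_mem_zpowers, fun h => ?_⟩
  have hsub : (zpowers b : Set G) ⊆ {y | y ^ orderOf b = 1} := fun y hy =>
    orderOf_dvd_iff_pow_eq_one.mp (orderOf_dvd_of_mem_zpowers hy)
  have hcard : {y : G | y ^ orderOf b = 1}.ncard ≤ (zpowers b : Set G).ncard := by
    rw [ncard_zpowers, Set.ncard_eq_toFinset_card', Set.toFinset_ofPred]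
    convert IsCyclic.card_pow_eq_one_le (α := G) (orderOf_pos b)
  rw [← SetLike.mem_coe, Set.eq_of_subset_of_ncard_le hsub hcard]
  exact orderOf_dvd_iff_pow_eq_one.mp h

lemma powerIncomparables_eq_empty_of_card_eq_prime_pow {p n : ℕ} (hp : p.Prime)
    (hcard : Nat.card G = p ^ n) (x : G) : powerIncomparables x = ∅ := by
  refine Set.eq_empty_of_forall_notMem fun y ⟨hyx, hxy⟩ => ?_
  obtain ⟨i, -, hx⟩ := (Nat.dvd_prime_pow hp).1 (hcard ▸ orderOf_dvd_natCard x)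
  obtain ⟨j, -, hy⟩ := (Nat.dvd_prime_pow hp).1 (hcard ▸ orderOf_dvd_natCard y)
  simp only [IsCyclic.mem_zpowers_iff_orderOf_dvd, hx, hy] at hyx hxy
  rcases le_total i j with hij | hji
  · exact hxy (pow_dvd_pow p hij)
  · exact hyx (pow_dvd_pow p hji)

lemma ncard_powerIncomparables_le_three_of_card_eq_six (hcard : Nat.card G = 6) (x : G) :
    (powerIncomparables x).ncard ≤ 3 := by
  obtain h1 | h2 | h3 : orderOf x = 1 ∨ orderOf x = 2 ∨ 3 ≤ orderOf x := by
    have := orderOf_pos x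
    omega
  · simp [orderOf_eq_one_iff.mp h1, powerIncomparables_one]
  · obtain ⟨z, hz⟩ := IsCyclic.exists_orderOf_eq_of_dvd (G := G) (d := 3) (by simp [hcard])
    -- an element incomparable with `x` has odd order, hence lies in the subgroup of order `3`
    have hsub : powerIncomparables x ⊆ zpowers z := by
      rintro y ⟨-, hxy⟩
      rw [IsCyclic.mem_zpowers_iff_orderOf_dvd, h2] at hxy
      rw [SetLike.mem_coe, IsCyclic.mem_zpowers_iff_orderOf_dvd, hz]
      have hy := orderOf_dvd_natCard y
      rw [hcard, show 6 = 2 * 3 from rfl] at hy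
      exact (Nat.prime_two.coprime_iff_not_dvd.mpr hxy).symm.dvd_of_dvd_mul_left hy
    calc (powerIncomparables x).ncard ≤ (zpowers z : Set G).ncard := Set.ncard_le_ncard hsub
      _ = 3 := by rw [ncard_zpowers, hz]
  · have := ncard_powerIncomparables_le x
    omega

/-- An element of order `p` is incomparable with every nontrivial element of the Hall
`p'`-subgroup. -/
lemma ordCompl_card_le_four (h : ∀ x : G, (powerIncomparables x).ncard ≤ 3) {p : ℕ}
    (hp : p.Prime) (hdvd : p ∣ Nat.card G) : ordCompl[p] (Nat.card G) ≤ 4 := by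
  obtain ⟨x, hx⟩ := IsCyclic.exists_orderOf_eq_of_dvd hdvd
  obtain ⟨z, hz⟩ := IsCyclic.exists_orderOf_eq_of_dvd (G := G) (Nat.ordCompl_dvd _ p)
  have hxz : x ∉ zpowers z := fun hmem => by
    have := orderOf_dvd_of_mem_zpowers hmem
    rw [hx, hz] at this
    exact Nat.not_dvd_ordCompl hp Nat.card_pos.ne' this
  have := card_sub_gcd_le_ncard_powerIncomparables hxz
  rw [Nat.card_zpowers, hz, hx, (Nat.coprime_ordCompl hp Nat.card_pos.ne').symm.gcd_eq_one] at this
  have := h x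
  omega

/-- An element of order `4` is incomparable with the four elements of order `3` or `6`. -/
lemma exists_three_lt_ncard_powerIncomparables_of_card_eq_twelve (hcard : Nat.card G = 12) :
    ∃ x : G, 3 < (powerIncomparables x).ncard := by
  obtain ⟨x, hx⟩ := IsCyclic.exists_orderOf_eq_of_dvd (G := G) (d := 4) (by simp [hcard])
  obtain ⟨z, hz⟩ := IsCyclic.exists_orderOf_eq_of_dvd (G := G) (d := 6) (by simp [hcard])
  have hxz : x ∉ zpowers z := fun hmem => by
    have := orderOf_dvd_of_mem_zpowers hmem
    rw [hx, hz] at this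
    norm_num at this
  refine ⟨x, lt_of_lt_of_le ?_ (card_sub_gcd_le_ncard_powerIncomparables hxz)⟩
  rw [Nat.card_zpowers, hz, hx]
  norm_num

lemma isPrimePow_card_or_card_eq_six_of_isCyclic [Nontrivial G]
    (h : ∀ x : G, (powerIncomparables x).ncard ≤ 3) :
    IsPrimePow (Nat.card G) ∨ Nat.card G = 6 := by
  refine or_iff_not_imp_left.mpr fun hpp => ?_
  obtain h6 | h12 := Nat.eq_six_or_eq_twelve_of_ordCompl_le_four Finite.one_lt_card hpp
    fun p hp hdvd => ordCompl_card_le_four h hp hdvd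
  · exact h6
  · obtain ⟨x, hx⟩ := exists_three_lt_ncard_powerIncomparables_of_card_eq_twelve h12
    exact absurd (h x) hx.not_ge

end Cyclic

section NonCyclic

variable {G : Type*} [Group G] [Finite G]

/-- An element of maximal order is incomparable with everything outside the proper subgroup
it generates, which has at most half of the elements. -/
lemma card_le_six_of_not_isCyclic (hG : ¬ IsCyclic G)
    (h : ∀ x : G, (powerIncomparables x).ncard ≤ 3) : Nat.card G ≤ 6 := by
  obtain ⟨x, hmax⟩ := Finite.exists_max (orderOf : G → ℕ)
  have hx := ncard_powerIncomparables_of_forall_mem_zpowers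
    fun y hxy => mem_zpowers_of_mem_zpowers_of_orderOf_le hxy (hmax y)
  obtain ⟨k, hk⟩ := orderOf_dvd_natCard x
  have hk2 : 2 ≤ k := by
    rcases k with _ | _ | k
    · exact absurd hk Nat.card_pos.ne'
    · exact absurd (isCyclic_of_orderOf_eq_card x (by simpa using hk.symm)) hG
    · omega
  have : orderOf x * 2 ≤ Nat.card G := hk ▸ Nat.mul_le_mul_left _ hk2
  have := h x
  omega

/-- In a non-cyclic group of order `6`, an element of order `2` lies in no larger cyclic
subgroup. -/
lemma exists_three_lt_ncard_powerIncomparables_of_not_isCyclic (hG : ¬ IsCyclic G)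
    (hcard : Nat.card G = 6) : ∃ x : G, 3 < (powerIncomparables x).ncard := by
  have := Fact.mk Nat.prime_two
  obtain ⟨x, hx⟩ := exists_prime_orderOf_dvd_card' (G := G) 2 (by simp [hcard])
  have hmax (y : G) (hxy : x ∈ zpowers y) : orderOf y ≤ orderOf x := by
    have h2 : 2 ∣ orderOf y := hx ▸ orderOf_dvd_of_mem_zpowers hxy
    have h6 : orderOf y ∣ 6 := hcard ▸ orderOf_dvd_natCard y
    have hne : orderOf y ≠ 6 := fun h => hG (isCyclic_of_orderOf_eq_card y (h.trans hcard.symm))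
    have := Nat.le_of_dvd (by norm_num) h6
    interval_cases orderOf y <;> omega
  refine ⟨x, ?_⟩
  rw [ncard_powerIncomparables_of_forall_mem_zpowers
    fun y hxy => mem_zpowers_of_mem_zpowers_of_orderOf_le hxy (hmax y hxy), hcard, hx]
  norm_num

lemma card_eq_four_of_not_isCyclic (hG : ¬ IsCyclic G)
    (h : ∀ x : G, (powerIncomparables x).ncard ≤ 3) : Nat.card G = 4 := by
  have : Nontrivial G := Nontrivial.of_not_isCyclic hG
  have h1 : 1 < Nat.card G := Finite.one_lt_card
  have h6 := card_le_six_of_not_isCyclic hG h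
  have hprime : ¬ (Nat.card G).Prime := fun hp => hG (have := Fact.mk hp; isCyclic_of_prime_card rfl)
  have hne6 : Nat.card G ≠ 6 := fun h6 => by
    obtain ⟨x, hx⟩ := exists_three_lt_ncard_powerIncomparables_of_not_isCyclic hG h6
    exact (h x).not_gt hx
  interval_cases Nat.card G <;> first | rfl | exact absurd rfl hne6 | norm_num at hprime

end NonCyclic

lemma Nat.card_eq_of_mulEquiv_zmod {G : Type*} [Group G] {n : ℕ}
    (e : G ≃* Multiplicative (ZMod n)) : Nat.card G = n := by
  rw [Nat.card_congr (e.toEquiv.trans Multiplicative.toAdd), Nat.card_zmod]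

/-- For a finite nontrivial group `G`, the complement of the proper power graph of
`G` contains no `K_{1,4}` subgraph (no vertex adjacent to four other distinct
vertices) iff `G ≅ ℤ/p^nℤ` (`p` prime, `n ≥ 1`), `G ≅ ℤ/6ℤ`, or
`G ≅ ℤ/2ℤ × ℤ/2ℤ`. -/
theorem propPowerCompl_no_K14_iff (G : Type*) [Group G] [Finite G] [Nontrivial G] :
    (¬ ∃ c w₁ w₂ w₃ w₄ : {g : G // g ≠ 1},
        w₁ ≠ w₂ ∧ w₁ ≠ w₃ ∧ w₁ ≠ w₄ ∧ w₂ ≠ w₃ ∧ w₂ ≠ w₄ ∧ w₃ ≠ w₄ ∧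
        (propPowerCompl G).Adj c w₁ ∧ (propPowerCompl G).Adj c w₂ ∧
        (propPowerCompl G).Adj c w₃ ∧ (propPowerCompl G).Adj c w₄) ↔
      ((∃ p n : ℕ, p.Prime ∧ 1 ≤ n ∧ Nonempty (G ≃* Multiplicative (ZMod (p ^ n)))) ∨
        Nonempty (G ≃* Multiplicative (ZMod 6)) ∨
        Nonempty (G ≃* Multiplicative (ZMod 2 × ZMod 2))) := by
  simp only [exists_star_propPowerCompl_iff, not_exists, not_lt]
  constructor
  · intro h
    by_cases hG : IsCyclic G
    · have hiso : Nonempty (G ≃* Multiplicative (ZMod (Nat.card G))) :=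
        ⟨(zmodCyclicMulEquiv hG).symm⟩
      obtain hpp | h6 := isPrimePow_card_or_card_eq_six_of_isCyclic h
      · obtain ⟨p, n, hp, hn, hpn⟩ := (isPrimePow_nat_iff _).mp hpp
        exact Or.inl ⟨p, n, hp, hn, hpn ▸ hiso⟩
      · exact Or.inr (Or.inl (h6 ▸ hiso))
    · have hcard := card_eq_four_of_not_isCyclic hG h
      have : IsKleinFour G :=
        ⟨hcard, (not_isCyclic_iff_exponent_eq_prime Nat.prime_two hcard).mp hG⟩
      exact Or.inr (Or.inr IsKleinFour.nonempty_mulEquiv)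
  · rintro (⟨p, n, hp, -, ⟨e⟩⟩ | ⟨⟨e⟩⟩ | ⟨⟨e⟩⟩) x
    · have := e.isCyclic.mpr inferInstance
      simp [powerIncomparables_eq_empty_of_card_eq_prime_pow hp (Nat.card_eq_of_mulEquiv_zmod e)]
    · have := e.isCyclic.mpr inferInstance
      exact ncard_powerIncomparables_le_three_of_card_eq_six (Nat.card_eq_of_mulEquiv_zmod e) x
    · have hcard : Nat.card G = 4 := (Nat.card_congr e.toEquiv).trans IsKleinFour.card_four
      have := ncard_powerIncomparables_le x
      have := orderOf_pos x
      omega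
end
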